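/- arXiv:2009.06550 — 2 statements merged into one kernel-verified Lean document; each statement's English description precedes it below -/
import Mathlib

section
/- (Generalized Slater CQ.) Suppose both the primal feasible set X(b) and the dual feasible set Y(c) are nonempty, and the primal is strictly feasible, i.e., there exists x ∈ relint C with b − A x ∈ relint K. Then strong duality holds: P* = D* and the dual is solvable, i.e., there exists y* ∈ Y(c) with ⟨b, y*⟩ = D*. -/
open RealInnerProductSpace Set Pointwise

variable {E E' : Type*}
  [NormedAddCommGroup E] [InnerProductSpace ℝ E] [FiniteDimensional ℝ E]
  [NormedAddCommGroup E'] [InnerProductSpace ℝ E'] [FiniteDimensional ℝ E']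

/-- A nonempty closed convex cone containing `0`. -/
structure IsClosedConvexCone {F : Type*} [NormedAddCommGroup F] [InnerProductSpace ℝ F]
    (K : Set F) : Prop where
  closed : IsClosed K
  convex : Convex ℝ K
  smul_mem : ∀ ⦃x⦄, x ∈ K → ∀ ⦃t : ℝ⦄, 0 ≤ t → t • x ∈ K
  zero_mem : (0 : F) ∈ K

/-- The dual cone `S* = {y : ⟨x,y⟩ ≥ 0 ∀ x ∈ S}`. -/
def dualCone {F : Type*} [NormedAddCommGroup F] [InnerProductSpace ℝ F] (S : Set F) : Set F :=
  {y | ∀ x ∈ S, 0 ≤ ⟪x, y⟫}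

/-- The polar cone `S° = {y : ⟨x,y⟩ ≤ 0 ∀ x ∈ S}`. -/
def polarCone {F : Type*} [NormedAddCommGroup F] [InnerProductSpace ℝ F] (S : Set F) : Set F :=
  {y | ∀ x ∈ S, ⟪x, y⟫ ≤ 0}

/-- Primal feasible set `X(b) = {x ∈ C : b - A x ∈ K}`. -/
def Xfeas (A : E →ₗ[ℝ] E') (K : Set E') (C : Set E) (b : E') : Set E :=
  {x | x ∈ C ∧ b - A x ∈ K}

/-- Dual feasible set `Y(c) = {y ∈ K* : A* y - c ∈ C*}`. -/
def Yfeas (A : E →ₗ[ℝ] E') (K : Set E') (C : Set E) (c : E) : Set E' :=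
  {y | y ∈ dualCone K ∧ LinearMap.adjoint A y - c ∈ dualCone C}

/-- Primal optimal value `P* = sup {⟨c,x⟩ : x ∈ X(b)}`. -/
noncomputable def Pval (A : E →ₗ[ℝ] E') (K : Set E') (C : Set E) (b : E') (c : E) : ℝ :=
  sSup ((fun x => ⟪c, x⟫) '' Xfeas A K C b)

/-- Dual optimal value `D* = inf {⟨b,y⟩ : y ∈ Y(c)}`. -/
noncomputable def Dval (A : E →ₗ[ℝ] E') (K : Set E') (C : Set E) (b : E') (c : E) : ℝ :=
  sInf ((fun y => ⟪b, y⟫) '' Yfeas A K C c)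

/-- Recession cone of the primal feasible region: `{x ∈ C : A x ∈ -K}`. -/
def recXSet (A : E →ₗ[ℝ] E') (K : Set E') (C : Set E) : Set E :=
  {x | x ∈ C ∧ A x ∈ -K}

/-- Recession cone of the dual feasible region: `{y ∈ K* : A* y ∈ C*}`. -/
def recYSet (A : E →ₗ[ℝ] E') (K : Set E') (C : Set E) : Set E' :=
  {y | y ∈ dualCone K ∧ LinearMap.adjoint A y ∈ dualCone C}

/-- `X(b)` is almost feasible. -/
def AlmostFeasX (A : E →ₗ[ℝ] E') (K : Set E') (C : Set E) (b : E') : Prop :=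
  ∀ ε : ℝ, 0 < ε → ∃ bε : E', ‖bε‖ ≤ ε ∧ (Xfeas A K C (b + bε)).Nonempty

/-- `Y(c)` is almost feasible. -/
def AlmostFeasY (A : E →ₗ[ℝ] E') (K : Set E') (C : Set E) (c : E) : Prop :=
  ∀ ε : ℝ, 0 < ε → ∃ cε : E, ‖cε‖ ≤ ε ∧ (Yfeas A K C (c + cε)).Nonempty

/-!
Weak duality bounds every primal value by every dual value, so `Y(c) ≠ ∅` makes `P*` finite.
For the converse consider the convex set `V` of pairs `(b - A x - k, t)` with `x ∈ C`, `k ∈ K`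
and `t ≤ ⟨c, x⟩`. The point `(0, P*)` lies in the affine hull of `V` but not in its relative
interior, so some functional `(u, t) ↦ ⟨y, u⟩ + β t` separates it properly from `V`. If `β = 0`,
the functional `(x, k) ↦ ⟨y, A x + k⟩` would attain its minimum over `C × K` at the Slater point,
a relative interior point, hence be constant there, contradicting properness. So `β > 0`, and on
`C × K` the multiplier `y / β` satisfies `⟨y / β, b - A x - k⟩ + ⟨c, x⟩ ≤ P*`; as `C` and `K` are
cones, this says that `y / β` is dual feasible with `⟨b, y / β⟩ ≤ P*`.
-/

open Filter Topology

section IntrinsicInterior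

variable {F : Type*} [NormedAddCommGroup F] [NormedSpace ℝ F]

theorem exists_pos_add_smul_sub_mem_of_mem_intrinsicInterior {S : Set F} {x₀ s : F}
    (hx₀ : x₀ ∈ intrinsicInterior ℝ S) (hs : s ∈ S) : ∃ ε : ℝ, 0 < ε ∧ x₀ + ε • (x₀ - s) ∈ S := by
  obtain ⟨y, hy, rfl⟩ := hx₀
  let γ : ℝ → affineSpan ℝ S := fun t =>
    ⟨t • ((y : F) -ᵥ s) +ᵥ (y : F),
      AffineSubspace.smul_vsub_vadd_mem _ t y.2 (subset_affineSpan ℝ S hs) y.2⟩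
  have hγ : Continuous γ := by fun_prop
  have hγ0 : γ 0 = y := by ext; simp [γ]
  have hnhds : ∀ᶠ t in 𝓝 (0 : ℝ), γ t ∈ interior ((↑) ⁻¹' S) :=
    hγ.continuousAt.preimage_mem_nhds (hγ0 ▸ isOpen_interior.mem_nhds hy)
  obtain ⟨ε, hεS, hε⟩ :=
    ((hnhds.filter_mono nhdsWithin_le_nhds).and (self_mem_nhdsWithin (s := Ioi 0))).exists
  refine ⟨ε, hε, ?_⟩
  simpa [γ, add_comm] using interior_subset hεS

theorem LinearMap.eq_of_isMinOn_of_mem_intrinsicInterior {S : Set F} (g : F →ₗ[ℝ] ℝ)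
    {x₀ s : F} (hx₀ : x₀ ∈ intrinsicInterior ℝ S) (hmin : IsMinOn g S x₀) (hs : s ∈ S) :
    g s = g x₀ := by
  obtain ⟨ε, hε, hmem⟩ := exists_pos_add_smul_sub_mem_of_mem_intrinsicInterior hx₀ hs
  have := isMinOn_iff.1 hmin _ hmem
  rw [map_add, map_smul, map_sub, smul_eq_mul] at this
  nlinarith [isMinOn_iff.1 hmin s hs]

theorem Convex.exists_forall_le_and_lt_of_notMem_interior {T : Set F} (hT : Convex ℝ T)
    (hTi : (interior T).Nonempty) {z : F} (hz : z ∉ interior T) :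
    ∃ f : F →L[ℝ] ℝ, (∀ v ∈ T, f v ≤ f z) ∧ ∃ v ∈ T, f v < f z := by
  obtain ⟨f, hf⟩ := geometric_hahn_banach_open_point hT.interior isOpen_interior hz
  refine ⟨f, fun v hv => ?_, hTi.imp fun v hv => ⟨interior_subset hv, hf v hv⟩⟩
  have hcl : v ∈ closure (interior T) :=
    hT.closure_interior_eq_closure_of_nonempty_interior hTi ▸ subset_closure hv
  exact closure_lt_subset_le f.continuous continuous_const (closure_mono hf hcl)

theorem Convex.exists_forall_le_and_lt_of_notMem_intrinsicInterior [FiniteDimensional ℝ F]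
    {S : Set F} (hS : Convex ℝ S) {z : F} (hz : z ∈ affineSpan ℝ S)
    (hzi : z ∉ intrinsicInterior ℝ S) :
    ∃ g : F →L[ℝ] ℝ, (∀ s ∈ S, g s ≤ g z) ∧ ∃ s ∈ S, g s < g z := by
  have : Nonempty (affineSpan ℝ S) := ⟨⟨z, hz⟩⟩
  let e := AffineIsometryEquiv.vaddConst ℝ (⟨z, hz⟩ : affineSpan ℝ S)
  let T : Set (affineSpan ℝ S).direction := e ⁻¹' ((↑) ⁻¹' S)
  have hT : Convex ℝ T :=
    hS.affine_preimage ((affineSpan ℝ S).subtype.comp e.toAffineEquiv.toAffineMap)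
  have hint : interior T = e ⁻¹' interior ((↑) ⁻¹' S) := (e.toHomeomorph.preimage_interior _).symm
  have hTi : (interior T).Nonempty := by
    obtain ⟨_, w, hw, rfl⟩ := Set.Nonempty.intrinsicInterior hS
      ((affineSpan_nonempty ℝ).1 ⟨z, hz⟩)
    exact ⟨e.symm w, by simpa [hint] using hw⟩
  have h0 : (0 : (affineSpan ℝ S).direction) ∉ interior T := by
    rw [hint]
    exact fun h => hzi ⟨_, h, by simp [e]⟩
  obtain ⟨f, hle, v, hv, hlt⟩ := hT.exists_forall_le_and_lt_of_notMem_interior hTi h0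
  obtain ⟨g, hg, -⟩ := exists_extension_norm_eq _ f
  refine ⟨g, fun s hs => ?_, _, hv, ?_⟩
  · have hsz := AffineSubspace.vsub_mem_direction (subset_affineSpan ℝ S hs) hz
    have := hle ⟨s - z, hsz⟩ (by simpa [T, e] using hs)
    rw [map_zero, ← hg, map_sub] at this
    simpa [sub_nonpos] using this
  · simpa [e, hg] using hlt

end IntrinsicInterior

theorem mem_dualCone_of_forall_le_inner {F : Type*} [NormedAddCommGroup F]
    [InnerProductSpace ℝ F] {Q : Set F} (hQ : ∀ ⦃q⦄, q ∈ Q → ∀ ⦃t : ℝ⦄, 0 ≤ t → t • q ∈ Q)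
    {w : F} {B : ℝ} (h : ∀ q ∈ Q, B ≤ ⟪q, w⟫) : w ∈ dualCone Q := by
  intro q hq
  by_contra! hneg
  have ht : 0 ≤ (|B| + 1) / -⟪q, w⟫ := div_nonneg (by positivity) (by linarith)
  have := h _ (hQ hq ht)
  rw [real_inner_smul_left, div_mul_eq_mul_div, div_neg, mul_div_assoc, div_self hneg.ne,
    mul_one] at this
  linarith [neg_abs_le B]

theorem exists_inner_add_mul_eq {F : Type*} [NormedAddCommGroup F] [InnerProductSpace ℝ F]
    [CompleteSpace F] (g : F × ℝ →L[ℝ] ℝ) :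
    ∃ (y : F) (β : ℝ), ∀ u t, g (u, t) = ⟪y, u⟫ + β * t := by
  refine ⟨(InnerProductSpace.toDual ℝ F).symm (g.comp (.inl ℝ F ℝ)), g (0, 1), fun u t => ?_⟩
  have hut : ((u, t) : F × ℝ) = ContinuousLinearMap.inl ℝ F ℝ u + t • (0, 1) := by simp
  rw [hut, map_add, map_smul, InnerProductSpace.toDual_symm_apply, smul_eq_mul, mul_comm]
  rfl

section PerturbationSet

variable {F F' : Type*} [NormedAddCommGroup F] [InnerProductSpace ℝ F]
  [NormedAddCommGroup F'] [InnerProductSpace ℝ F']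

/-- The points `(u, t)` such that some `x ∈ C` is feasible for the right-hand side `b - u` with
objective value at least `t`. -/
def perturbationSet (A : F →ₗ[ℝ] F') (K : Set F') (C : Set F) (b : F') (c : F) : Set (F' × ℝ) :=
  {q | ∃ x ∈ C, ∃ k ∈ K, q.1 = b - A x - k ∧ q.2 ≤ ⟪c, x⟫}

variable {A : F →ₗ[ℝ] F'} {K : Set F'} {C : Set F} {b : F'} {c : F}

theorem convex_perturbationSet (hK : Convex ℝ K) (hC : Convex ℝ C) :
    Convex ℝ (perturbationSet A K C b c) := by
  rintro ⟨_, t₁⟩ ⟨x₁, hx₁, k₁, hk₁, rfl, ht₁⟩ ⟨_, t₂⟩ ⟨x₂, hx₂, k₂, hk₂, rfl, ht₂⟩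
    a a' ha ha' haa'
  refine ⟨a • x₁ + a' • x₂, hC hx₁ hx₂ ha ha' haa',
    a • k₁ + a' • k₂, hK hk₁ hk₂ ha ha' haa', ?_, ?_⟩
  · have hb : b = a • b + a' • b := by rw [← add_smul, haa', one_smul]
    simp only [Prod.smul_mk, Prod.mk_add_mk, map_add, map_smul]
    conv_rhs => rw [hb]
    module
  · simp only [Prod.smul_mk, Prod.mk_add_mk, smul_eq_mul, inner_add_right, real_inner_smul_right]
    gcongr

theorem mem_Xfeas_of_mem_intrinsicInterior {x : F} (hx : x ∈ intrinsicInterior ℝ C)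
    (hk : b - A x ∈ intrinsicInterior ℝ K) : x ∈ Xfeas A K C b :=
  ⟨intrinsicInterior_subset hx, intrinsicInterior_subset hk⟩

theorem mk_zero_mem_perturbationSet {x : F} (hx : x ∈ Xfeas A K C b) {t : ℝ} (ht : t ≤ ⟪c, x⟫) :
    ((0 : F'), t) ∈ perturbationSet A K C b c :=
  ⟨x, hx.1, b - A x, hx.2, by simp, ht⟩

theorem mk_zero_mem_affineSpan_perturbationSet {x₀ : F} (hx₀ : x₀ ∈ Xfeas A K C b) (p : ℝ) :
    ((0 : F'), p) ∈ affineSpan ℝ (perturbationSet A K C b c) := by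
  have hmem := fun t (ht : t ≤ ⟪c, x₀⟫) =>
    subset_affineSpan ℝ _ (mk_zero_mem_perturbationSet (c := c) hx₀ ht)
  convert AffineSubspace.smul_vsub_vadd_mem _ (p - ⟪c, x₀⟫) (hmem _ le_rfl)
    (hmem (⟪c, x₀⟫ - 1) (by linarith)) (hmem _ le_rfl) using 1
  ext <;> simp

theorem mk_zero_notMem_intrinsicInterior_perturbationSet {x₀ : F} (hx₀ : x₀ ∈ Xfeas A K C b)
    {p : ℝ} (hp : ∀ x ∈ Xfeas A K C b, ⟪c, x⟫ ≤ p) :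
    ((0 : F'), p) ∉ intrinsicInterior ℝ (perturbationSet A K C b c) := by
  intro h
  obtain ⟨ε, hε, x, hx, k, hk, hxk, ht⟩ := exists_pos_add_smul_sub_mem_of_mem_intrinsicInterior h
    (mk_zero_mem_perturbationSet hx₀ (sub_le_self _ zero_le_one))
  simp only [Prod.smul_mk, Prod.mk_add_mk, Prod.mk_sub_mk, sub_zero, smul_zero, add_zero,
    smul_eq_mul] at hxk ht
  have hxX : x ∈ Xfeas A K C b := ⟨hx, by rwa [sub_eq_zero.1 hxk.symm]⟩
  nlinarith [hp x hxX, hp x₀ hx₀]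

theorem exists_separating_perturbationSet [FiniteDimensional ℝ F'] (hK : Convex ℝ K)
    (hC : Convex ℝ C) {x₀ : F} (hx₀ : x₀ ∈ Xfeas A K C b) {p : ℝ}
    (hp : ∀ x ∈ Xfeas A K C b, ⟪c, x⟫ ≤ p) :
    ∃ (y : F') (β : ℝ), (∀ q ∈ perturbationSet A K C b c, ⟪y, q.1⟫ + β * q.2 ≤ β * p) ∧
      ∃ q ∈ perturbationSet A K C b c, ⟪y, q.1⟫ + β * q.2 < β * p := by
  obtain ⟨g, hle, q, hq, hlt⟩ :=
    (convex_perturbationSet hK hC).exists_forall_le_and_lt_of_notMem_intrinsicInterior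
      (mk_zero_mem_affineSpan_perturbationSet hx₀ p)
      (mk_zero_notMem_intrinsicInterior_perturbationSet hx₀ hp)
  obtain ⟨y, β, hg⟩ := exists_inner_add_mul_eq g
  refine ⟨y, β, fun q hq => ?_, q, hq, ?_⟩
  · simpa [hg] using hle q hq
  · simpa [hg] using hlt

theorem pos_of_separates_perturbationSet
    (hslater : ∃ x ∈ intrinsicInterior ℝ C, b - A x ∈ intrinsicInterior ℝ K) {y : F'} {β p : ℝ}
    (hle : ∀ q ∈ perturbationSet A K C b c, ⟪y, q.1⟫ + β * q.2 ≤ β * p)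
    (hlt : ∃ q ∈ perturbationSet A K C b c, ⟪y, q.1⟫ + β * q.2 < β * p) : 0 < β := by
  obtain ⟨xs, hxs, hks⟩ := hslater
  have hxsX := mem_Xfeas_of_mem_intrinsicInterior hxs hks
  have hβ : 0 ≤ β := by
    by_contra! hβ
    have := hle _ (mk_zero_mem_perturbationSet hxsX (min_le_left _ (p - 1)))
    simp only [inner_zero_right, zero_add] at this
    nlinarith [min_le_right ⟪c, xs⟫ (p - 1)]
  refine hβ.lt_of_ne fun hβ0 => ?_
  subst hβ0
  simp only [zero_mul, add_zero] at hle hlt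
  let ℓ : F × F' →ₗ[ℝ] ℝ := (innerₗ F' y).comp (A.coprod LinearMap.id)
  have hℓ : ∀ x k, ⟪y, b - A x - k⟫ = ℓ (xs, b - A xs) - ℓ (x, k) := fun x k => by
    change _ = ⟪y, A xs + (b - A xs)⟫ - ⟪y, A x + k⟫
    rw [add_sub_cancel, ← inner_sub_right, sub_sub]
  have hmin : IsMinOn ℓ (C ×ˢ K) (xs, b - A xs) := isMinOn_iff.2 <| by
    rintro ⟨x, k⟩ ⟨hx, hk⟩
    linarith [hℓ x k, hle (b - A x - k, ⟪c, x⟫) ⟨x, hx, k, hk, rfl, le_rfl⟩]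
  obtain ⟨⟨_, t⟩, ⟨x, hx, k, hk, rfl, -⟩, hq⟩ := hlt
  have := ℓ.eq_of_isMinOn_of_mem_intrinsicInterior
    (by rw [intrinsicInterior_prod_eq]; exact ⟨hxs, hks⟩) hmin (mk_mem_prod hx hk)
  linarith [hℓ x k]

theorem exists_lagrange_multiplier [FiniteDimensional ℝ F'] (hK : Convex ℝ K) (hC : Convex ℝ C)
    (hslater : ∃ x ∈ intrinsicInterior ℝ C, b - A x ∈ intrinsicInterior ℝ K) {p : ℝ}
    (hp : ∀ x ∈ Xfeas A K C b, ⟪c, x⟫ ≤ p) :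
    ∃ y : F', ∀ x ∈ C, ∀ k ∈ K, ⟪y, b - A x - k⟫ + ⟪c, x⟫ ≤ p := by
  obtain ⟨xs, hxs, hks⟩ := hslater
  obtain ⟨y, β, hle, hlt⟩ :=
    exists_separating_perturbationSet hK hC (mem_Xfeas_of_mem_intrinsicInterior hxs hks) hp
  have hβ := pos_of_separates_perturbationSet ⟨xs, hxs, hks⟩ hle hlt
  refine ⟨β⁻¹ • y, fun x hx k hk => ?_⟩
  have := hle (b - A x - k, ⟪c, x⟫) ⟨x, hx, k, hk, rfl, le_rfl⟩
  rw [real_inner_smul_left, ← mul_le_mul_iff_right₀ hβ, mul_add, ← mul_assoc,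
    mul_inv_cancel₀ hβ.ne', one_mul]
  linarith

end PerturbationSet

section ConicDuality

variable {A : E →ₗ[ℝ] E'} {K : Set E'} {C : Set E} {b : E'} {c : E}

theorem inner_le_inner_of_mem_Xfeas_of_mem_Yfeas {x : E} {y : E'} (hx : x ∈ Xfeas A K C b)
    (hy : y ∈ Yfeas A K C c) : ⟪c, x⟫ ≤ ⟪b, y⟫ := by
  have hK := hy.1 _ hx.2
  have hC := hy.2 x hx.1
  rw [inner_sub_left] at hK
  rw [inner_sub_right, LinearMap.adjoint_inner_right, real_inner_comm c x] at hC
  linarith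

theorem inner_le_Pval {y₀ : E'} (hy₀ : y₀ ∈ Yfeas A K C c) {x : E} (hx : x ∈ Xfeas A K C b) :
    ⟪c, x⟫ ≤ Pval A K C b c :=
  le_csSup ⟨⟪b, y₀⟫, by
    rintro _ ⟨x', hx', rfl⟩
    exact inner_le_inner_of_mem_Xfeas_of_mem_Yfeas hx' hy₀⟩ ⟨x, hx, rfl⟩

theorem Pval_le_inner {x₀ : E} (hx₀ : x₀ ∈ Xfeas A K C b) {y : E'} (hy : y ∈ Yfeas A K C c) :
    Pval A K C b c ≤ ⟪b, y⟫ :=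
  csSup_le ⟨_, x₀, hx₀, rfl⟩ <| by
    rintro _ ⟨x, hx, rfl⟩
    exact inner_le_inner_of_mem_Xfeas_of_mem_Yfeas hx hy

theorem Pval_eq_Dval_of_mem_Yfeas_of_inner_le {x₀ : E} (hx₀ : x₀ ∈ Xfeas A K C b) {y : E'}
    (hy : y ∈ Yfeas A K C c) (hyb : ⟪b, y⟫ ≤ Pval A K C b c) :
    Pval A K C b c = Dval A K C b c ∧ ⟪b, y⟫ = Dval A K C b c := by
  have hD : Dval A K C b c = ⟪b, y⟫ := IsLeast.csInf_eq ⟨⟨y, hy, rfl⟩, by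
    rintro _ ⟨y', hy', rfl⟩
    exact hyb.trans (Pval_le_inner hx₀ hy')⟩
  exact ⟨hD ▸ le_antisymm (Pval_le_inner hx₀ hy) hyb, hD.symm⟩

theorem mem_Yfeas_of_forall_inner_add_le (hK₀ : (0 : E') ∈ K)
    (hK : ∀ ⦃k⦄, k ∈ K → ∀ ⦃t : ℝ⦄, 0 ≤ t → t • k ∈ K) (hC₀ : (0 : E) ∈ C)
    (hC : ∀ ⦃x⦄, x ∈ C → ∀ ⦃t : ℝ⦄, 0 ≤ t → t • x ∈ C) {y : E'} {p : ℝ}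
    (h : ∀ x ∈ C, ∀ k ∈ K, ⟪y, b - A x - k⟫ + ⟪c, x⟫ ≤ p) :
    y ∈ Yfeas A K C c ∧ ⟪b, y⟫ ≤ p := by
  refine ⟨⟨mem_dualCone_of_forall_le_inner hK (B := ⟪b, y⟫ - p) fun k hk => ?_,
    mem_dualCone_of_forall_le_inner hC (B := ⟪b, y⟫ - p) fun x hx => ?_⟩, ?_⟩
  · have := h 0 hC₀ k hk
    simp only [map_zero, sub_zero, inner_zero_right, add_zero, inner_sub_right] at this
    rw [real_inner_comm y b, real_inner_comm y k]
    linarith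
  · have := h x hx 0 hK₀
    rw [sub_zero, inner_sub_right] at this
    rw [inner_sub_right, LinearMap.adjoint_inner_right, real_inner_comm y b,
      real_inner_comm y (A x), real_inner_comm c x]
    linarith
  · simpa [real_inner_comm] using h 0 hC₀ 0 hK₀

end ConicDuality

theorem stmt1_general (A : E →ₗ[ℝ] E') (K : Set E') (C : Set E)
    (hK : IsClosedConvexCone K) (hC : IsClosedConvexCone C) (b : E') (c : E)
    (hYne : (Yfeas A K C c).Nonempty)
    (hslater : ∃ x ∈ intrinsicInterior ℝ C, b - A x ∈ intrinsicInterior ℝ K) :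
    Pval A K C b c = Dval A K C b c ∧
      ∃ y ∈ Yfeas A K C c, ⟪b, y⟫ = Dval A K C b c := by
  obtain ⟨y₀, hy₀⟩ := hYne
  obtain ⟨y, hy⟩ := exists_lagrange_multiplier hK.convex hC.convex hslater
    fun x hx => inner_le_Pval hy₀ hx
  obtain ⟨hyY, hyb⟩ :=
    mem_Yfeas_of_forall_inner_add_le hK.zero_mem hK.smul_mem hC.zero_mem hC.smul_mem hy
  obtain ⟨xs, hxs, hks⟩ := hslater
  obtain ⟨hPD, hyD⟩ :=
    Pval_eq_Dval_of_mem_Yfeas_of_inner_le (mem_Xfeas_of_mem_intrinsicInterior hxs hks) hyY hyb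
  exact ⟨hPD, y, hyY, hyD⟩

theorem stmt1 (A : E →ₗ[ℝ] E') (K : Set E') (C : Set E)
    (hK : IsClosedConvexCone K) (hC : IsClosedConvexCone C) (b : E') (c : E)
    (hXne : (Xfeas A K C b).Nonempty) (hYne : (Yfeas A K C c).Nonempty)
    (hslater : ∃ x ∈ intrinsicInterior ℝ C, b - A x ∈ intrinsicInterior ℝ K) :
    Pval A K C b c = Dval A K C b c ∧
      ∃ y ∈ Yfeas A K C c, ⟪b, y⟫ = Dval A K C b c :=
  stmt1_general A K C hK hC b c hYne hslater
end

section
/- Let L : E → E' be a linear map with adjoint L*, and let Q ⊆ E' be a nonempty closed convex cone. Then the polar cone of the preimage L⁻¹(−Q) equals the closure of L*(Q*), i.e., (L⁻¹(−Q))° = cl(L*(Q*)), and consequently L⁻¹(−Q) = (cl(L*(Q*)))°. -/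
open RealInnerProductSpace Set Pointwise

variable {E E' : Type*}
  [NormedAddCommGroup E] [InnerProductSpace ℝ E] [FiniteDimensional ℝ E]
  [NormedAddCommGroup E'] [InnerProductSpace ℝ E'] [FiniteDimensional ℝ E']

/-! By Farkas' lemma, `cl(L*(Q*))` is the dual cone of `L⁻¹(Q**) = L⁻¹(Q)`. Since the polar cone
is the negated dual cone, this is the first claim; the second follows from it by the bipolar
theorem for the closed convex cone `L⁻¹(Q)`. -/

section Cones

variable {F : Type*} [NormedAddCommGroup F] [InnerProductSpace ℝ F] {K : Set F}

theorem IsClosedConvexCone.add_mem (hK : IsClosedConvexCone K) {x y : F} (hx : x ∈ K)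
    (hy : y ∈ K) : x + y ∈ K := by
  have hmid := hK.convex hx hy (by norm_num : (0 : ℝ) ≤ 1 / 2) (by norm_num : (0 : ℝ) ≤ 1 / 2)
    (by norm_num)
  convert hK.smul_mem hmid (by norm_num : (0 : ℝ) ≤ 2) using 1
  rw [smul_add, smul_smul, smul_smul]
  norm_num

def IsClosedConvexCone.toProperCone (hK : IsClosedConvexCone K) : ProperCone ℝ F where
  carrier := K
  add_mem' := hK.add_mem
  zero_mem' := hK.zero_mem
  smul_mem' c _ hx := hK.smul_mem hx c.2
  isClosed' := hK.closed

@[simp]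
theorem IsClosedConvexCone.coe_toProperCone (hK : IsClosedConvexCone K) :
    (hK.toProperCone : Set F) = K := rfl

theorem IsClosedConvexCone.dualCone_dualCone [CompleteSpace F] (hK : IsClosedConvexCone K) :
    dualCone (dualCone K) = K :=
  congrArg SetLike.coe (ProperCone.innerDual_innerDual hK.toProperCone)

theorem IsClosedConvexCone.preimage {G : Type*} [NormedAddCommGroup G] [InnerProductSpace ℝ G]
    [FiniteDimensional ℝ G] (hK : IsClosedConvexCone K) (A : G →ₗ[ℝ] F) :
    IsClosedConvexCone (A ⁻¹' K) where
  closed := hK.closed.preimage A.continuous_of_finiteDimensional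
  convex := hK.convex.linear_preimage A
  smul_mem _ hx _ ht := by simpa only [mem_preimage, map_smul] using hK.smul_mem hx ht
  zero_mem := by simpa only [mem_preimage, map_zero] using hK.zero_mem

theorem dualCone_neg (S : Set F) : dualCone (-S) = -dualCone S := by
  ext y
  simp [dualCone, inner_neg_left, inner_neg_right]

theorem polarCone_eq_neg_dualCone (S : Set F) : polarCone S = -dualCone S := by
  ext y
  simp [polarCone, dualCone, inner_neg_right]

end Cones

theorem preimage_neg_eq_neg_preimage {G H 𝓕 : Type*} [AddGroup G] [AddGroup H] [FunLike 𝓕 G H]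
    [AddMonoidHomClass 𝓕 G H] (f : 𝓕) (s : Set H) : f ⁻¹' (-s) = -(f ⁻¹' s) := by
  ext x
  simp

theorem closure_image_adjoint_dualCone (L : E →ₗ[ℝ] E') {Q : Set E'}
    (hQ : IsClosedConvexCone Q) :
    closure (LinearMap.adjoint L '' dualCone Q) = dualCone (L ⁻¹' Q) := by
  have := FiniteDimensional.complete ℝ E
  have := FiniteDimensional.complete ℝ E'
  ext b
  have farkas := ProperCone.relative_hyperplane_separation (C := ProperCone.innerDual Q)
    (f := L.toContinuousLinearMap.adjoint) (b := b)
  rw [ContinuousLinearMap.adjoint_adjoint, ← hQ.coe_toProperCone,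
    ProperCone.innerDual_innerDual] at farkas
  exact farkas.trans (forall₂_congr fun y _ => by rw [real_inner_comm])

theorem stmt5 (L : E →ₗ[ℝ] E') (Q : Set E') (hQ : IsClosedConvexCone Q) :
    polarCone (⇑L ⁻¹' (-Q)) = closure (⇑(LinearMap.adjoint L) '' dualCone Q) ∧
    ⇑L ⁻¹' (-Q) = polarCone (closure (⇑(LinearMap.adjoint L) '' dualCone Q)) := by
  rw [closure_image_adjoint_dualCone L hQ, polarCone_eq_neg_dualCone, polarCone_eq_neg_dualCone,
    preimage_neg_eq_neg_preimage, dualCone_neg, neg_neg, (hQ.preimage L).dualCone_dualCone]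
  exact ⟨rfl, rfl⟩
end
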